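/- arXiv:1110.1078 — 2 statements merged into one kernel-verified Lean document; each statement's English description precedes it below -/
import Mathlib

section
/- Let x ∈ ℝ^{np} be k-block-sparse with block support S = bsupp(x), let y = Ax + w with ‖A^T w‖_{b∞} ≤ κμ for some κ ∈ (0,1) and μ > 0, and let x̂ be a minimizer of (1/2)‖y − Az‖₂² + μ‖z‖_{b1} over z ∈ ℝ^{np} (the Block-Sparse LASSO). Then the error vector h = x̂ − x satisfies ‖h_{S^c}‖_{b1} ≤ ((1+κ)/(1−κ))‖h_S‖_{b1}, and consequently ‖h_S‖_{b1} ≥ ((1−κ)/2)‖h‖_{b1}. -/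
open MeasureTheory ProbabilityTheory Finset Matrix

/-- Euclidean norm of a finitely-indexed real vector. -/
noncomputable def vnorm {ι : Type*} [Fintype ι] (v : ι → ℝ) : ℝ :=
  Real.sqrt (∑ i, (v i) ^ 2)

/-- Euclidean norm of the `i`-th block of `x ∈ ℝ^{np}` (blocks indexed by `Fin p`). -/
noncomputable def bnorm {n p : ℕ} (x : Fin p × Fin n → ℝ) (i : Fin p) : ℝ :=
  vnorm (fun j => x (i, j))

/-- Block-ℓ1 norm: `‖x‖_{b1} = ∑ i, ‖x_i‖₂`. -/
noncomputable def bl1 {n p : ℕ} (x : Fin p × Fin n → ℝ) : ℝ :=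
  ∑ i, bnorm x i

/-- Block-ℓ∞ norm: `‖x‖_{b∞} = max_i ‖x_i‖₂`. -/
noncomputable def blinf {n p : ℕ} (x : Fin p × Fin n → ℝ) : ℝ :=
  ⨆ i, bnorm x i

open scoped Classical in
/-- Block support: indices of nonzero blocks. -/
noncomputable def bsupp {n p : ℕ} (x : Fin p × Fin n → ℝ) : Finset (Fin p) :=
  Finset.univ.filter (fun i => ∃ j, x (i, j) ≠ 0)

/-- `ω₂(A,s) = inf { ‖Az‖₂ / ‖z‖_{b∞} : z ≠ 0, ‖z‖_{b1} ≤ s ‖z‖_{b∞} }`. -/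
noncomputable def omega2 {m n p : ℕ} (A : Matrix (Fin m) (Fin p × Fin n) ℝ) (s : ℝ) : ℝ :=
  sInf {r | ∃ z : Fin p × Fin n → ℝ, z ≠ 0 ∧ bl1 z ≤ s * blinf z ∧
    r = vnorm (A.mulVec z) / blinf z}

/-- `ω_{b∞}(AᵀA,s) = inf { ‖AᵀAz‖_{b∞} / ‖z‖_{b∞} : z ≠ 0, ‖z‖_{b1} ≤ s ‖z‖_{b∞} }`. -/
noncomputable def omegaBInf {m n p : ℕ} (A : Matrix (Fin m) (Fin p × Fin n) ℝ) (s : ℝ) : ℝ :=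
  sInf {r | ∃ z : Fin p × Fin n → ℝ, z ≠ 0 ∧ bl1 z ≤ s * blinf z ∧
    r = blinf ((Aᵀ * A).mulVec z) / blinf z}

/-- Block ℓ1-constrained minimal singular value
`ρ_s(A) = inf { ‖Az‖₂ / ‖z‖₂ : z ≠ 0, ‖z‖_{b1}² ≤ s ‖z‖₂² }`. -/
noncomputable def rhoCMSV {m n p : ℕ} (A : Matrix (Fin m) (Fin p × Fin n) ℝ) (s : ℝ) : ℝ :=
  sInf {r | ∃ z : Fin p × Fin n → ℝ, z ≠ 0 ∧ (bl1 z) ^ 2 ≤ s * (vnorm z) ^ 2 ∧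
    r = vnorm (A.mulVec z) / vnorm z}

/-- Spectral norm (largest singular value) of a real matrix, as the ℓ2→ℓ2 operator norm. -/
noncomputable def specNorm {ι κ : Type*} [Fintype ι] [Fintype κ] (M : Matrix ι κ ℝ) : ℝ :=
  sSup {r | ∃ v : κ → ℝ, vnorm v ≤ 1 ∧ r = vnorm (M.mulVec v)}

/-- The `j`-th column block (of `n` columns) of a matrix with `np` columns. -/
def colBlock {ι : Type*} {n p : ℕ} (Q : Matrix ι (Fin p × Fin n) ℝ) (j : Fin p) :
    Matrix ι (Fin n) ℝ := Matrix.of fun r c => Q r (j, c)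

/-- The `l`-th row block (of `n` rows) of a matrix with `np` rows. -/
def rowBlock {κ : Type*} {n p : ℕ} (P : Matrix (Fin p × Fin n) κ ℝ) (l : Fin p) :
    Matrix (Fin n) κ ℝ := Matrix.of fun r c => P (l, r) c

/-- `δ_{ij} Iₙ`. -/
def deltaId (n : ℕ) {p : ℕ} (i j : Fin p) : Matrix (Fin n) (Fin n) ℝ :=
  if i = j then 1 else 0

/-- Orlicz ψ₂ norm of a scalar random variable. -/
noncomputable def psi2 {Ω : Type*} [MeasurableSpace Ω] (μ : Measure Ω) (Y : Ω → ℝ) : ℝ :=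
  sInf {t | 0 < t ∧ ∫ ω, Real.exp ((Y ω) ^ 2 / t ^ 2) ∂μ ≤ 2}

/-!
Comparing the objective at `xhat` with its value at `x` gives the basic inequality
`μ (‖xhat‖_{b1} - ‖x‖_{b1}) ≤ ⟨Aᵀw, h⟩ ≤ κμ ‖h‖_{b1}`, the last step by block Hölder.
Since `x` vanishes off `S`, the block-ℓ1 norm decomposes:
`‖x + h‖_{b1} - ‖x‖_{b1} ≥ ‖h_{Sᶜ}‖_{b1} - ‖h_S‖_{b1}`. Together these give the cone condition
`‖h_{Sᶜ}‖_{b1} - ‖h_S‖_{b1} ≤ κ (‖h_S‖_{b1} + ‖h_{Sᶜ}‖_{b1})`, which rearranges to both claims.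
-/

section Euclidean

variable {ι : Type*} [Fintype ι]

lemma vnorm_eq_norm (v : ι → ℝ) : vnorm v = ‖WithLp.toLp 2 v‖ := by
  simp [vnorm, EuclideanSpace.norm_eq]

lemma vnorm_nonneg (v : ι → ℝ) : 0 ≤ vnorm v :=
  Real.sqrt_nonneg _

lemma vnorm_sq (v : ι → ℝ) : vnorm v ^ 2 = ∑ i, v i ^ 2 :=
  Real.sq_sqrt (Finset.sum_nonneg fun _ _ => sq_nonneg _)

lemma dotProduct_le_vnorm_mul_vnorm (u v : ι → ℝ) : u ⬝ᵥ v ≤ vnorm u * vnorm v := by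
  have := real_inner_le_norm (WithLp.toLp 2 v : EuclideanSpace ℝ ι) (WithLp.toLp 2 u)
  simpa [EuclideanSpace.inner_eq_star_dotProduct, vnorm_eq_norm, mul_comm] using this

lemma vnorm_sub_sq (u v : ι → ℝ) :
    vnorm (u - v) ^ 2 = vnorm u ^ 2 - 2 * (u ⬝ᵥ v) + vnorm v ^ 2 := by
  simp only [vnorm_sq, dotProduct, Pi.sub_apply, sub_sq, Finset.sum_add_distrib,
    Finset.sum_sub_distrib, Finset.mul_sum, mul_assoc]

end Euclidean

theorem penalty_sub_le_dotProduct_of_le {ι κ : Type*} [Fintype ι] [Fintype κ]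
    (A : Matrix κ ι ℝ) (R : (ι → ℝ) → ℝ) {x xhat : ι → ℝ} {w y : κ → ℝ} {μ : ℝ}
    (hy : y = A *ᵥ x + w)
    (hmin : (1 / 2) * vnorm (y - A *ᵥ xhat) ^ 2 + μ * R xhat ≤
      (1 / 2) * vnorm (y - A *ᵥ x) ^ 2 + μ * R x) :
    μ * (R xhat - R x) ≤ (Aᵀ *ᵥ w) ⬝ᵥ (xhat - x) := by
  have hres : y - A *ᵥ xhat = w - A *ᵥ (xhat - x) := by
    rw [hy, Matrix.mulVec_sub]; abel
  have hw : y - A *ᵥ x = w := by rw [hy]; abel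
  rw [hres, hw, vnorm_sub_sq, Matrix.dotProduct_mulVec, ← Matrix.mulVec_transpose] at hmin
  nlinarith [sq_nonneg (vnorm (A *ᵥ (xhat - x)))]

section Blocks

variable {n p : ℕ}

lemma bnorm_nonneg (x : Fin p × Fin n → ℝ) (i : Fin p) : 0 ≤ bnorm x i :=
  vnorm_nonneg _

lemma bnorm_le_blinf (x : Fin p × Fin n → ℝ) (i : Fin p) : bnorm x i ≤ blinf x :=
  le_ciSup (Set.finite_range _).bddAbove i

lemma dotProduct_le_blinf_mul_bl1 (v h : Fin p × Fin n → ℝ) : v ⬝ᵥ h ≤ blinf v * bl1 h := by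
  rw [dotProduct, Fintype.sum_prod_type, bl1, Finset.mul_sum]
  gcongr with i
  calc ∑ j, v (i, j) * h (i, j) ≤ bnorm v i * bnorm h i := dotProduct_le_vnorm_mul_vnorm _ _
    _ ≤ blinf v * bnorm h i := by gcongr; exacts [bnorm_nonneg h i, bnorm_le_blinf v i]

lemma bnorm_le_add_bnorm_sub (x y : Fin p × Fin n → ℝ) (i : Fin p) :
    bnorm x i ≤ bnorm y i + bnorm (y - x) i := by
  simp only [bnorm, vnorm_eq_norm]
  exact norm_le_norm_add_norm_sub _ _

lemma block_eq_zero_of_notMem_bsupp {x : Fin p × Fin n → ℝ} {i : Fin p} (hi : i ∉ bsupp x) :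
    (fun j => x (i, j)) = 0 := by
  funext j
  simp only [bsupp, Finset.mem_filter, Finset.mem_univ, true_and, not_exists, not_not] at hi
  exact hi j

lemma bnorm_eq_zero_of_notMem_bsupp {x : Fin p × Fin n → ℝ} {i : Fin p} (hi : i ∉ bsupp x) :
    bnorm x i = 0 := by
  rw [bnorm, block_eq_zero_of_notMem_bsupp hi]
  simp [vnorm]

lemma bnorm_add_of_notMem_bsupp {x : Fin p × Fin n → ℝ} {i : Fin p} (hi : i ∉ bsupp x)
    (h : Fin p × Fin n → ℝ) : bnorm (x + h) i = bnorm h i := by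
  have := congrFun (block_eq_zero_of_notMem_bsupp hi)
  simp only [bnorm, Pi.add_apply, this, Pi.zero_apply, zero_add]

lemma bl1_eq_sum_bsupp (x : Fin p × Fin n → ℝ) : bl1 x = ∑ i ∈ bsupp x, bnorm x i :=
  (Finset.sum_subset (Finset.subset_univ _) fun _ _ hi => bnorm_eq_zero_of_notMem_bsupp hi).symm

lemma sum_compl_sub_sum_le_bl1_add_sub_bl1 (x h : Fin p × Fin n → ℝ) :
    ∑ i ∈ (bsupp x)ᶜ, bnorm h i - ∑ i ∈ bsupp x, bnorm h i ≤ bl1 (x + h) - bl1 x := by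
  have hS : ∑ i ∈ bsupp x, bnorm x i ≤ ∑ i ∈ bsupp x, (bnorm (x + h) i + bnorm h i) :=
    Finset.sum_le_sum fun i _ => by simpa using bnorm_le_add_bnorm_sub x (x + h) i
  have hSc : ∑ i ∈ (bsupp x)ᶜ, bnorm (x + h) i = ∑ i ∈ (bsupp x)ᶜ, bnorm h i :=
    Finset.sum_congr rfl fun i hi => bnorm_add_of_notMem_bsupp (Finset.mem_compl.1 hi) h
  rw [bl1_eq_sum_bsupp x, bl1, ← Finset.sum_add_sum_compl (bsupp x), hSc]
  rw [Finset.sum_add_distrib] at hS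
  linarith

end Blocks

theorem stmt2_general {m n p : ℕ} (A : Matrix (Fin m) (Fin p × Fin n) ℝ)
    (x : Fin p × Fin n → ℝ) (w y : Fin m → ℝ) (xhat : Fin p × Fin n → ℝ) (κ μ : ℝ)
    (hκ1 : κ < 1) (hμ : 0 < μ)
    (hy : y = A.mulVec x + w)
    (hw : blinf (Aᵀ.mulVec w) ≤ κ * μ)
    (hmin : ∀ z : Fin p × Fin n → ℝ,
      (1 / 2) * (vnorm (y - A.mulVec xhat)) ^ 2 + μ * bl1 xhat ≤
        (1 / 2) * (vnorm (y - A.mulVec z)) ^ 2 + μ * bl1 z) :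
    (∑ i ∈ (bsupp x)ᶜ, bnorm (xhat - x) i ≤
      ((1 + κ) / (1 - κ)) * ∑ i ∈ bsupp x, bnorm (xhat - x) i) ∧
    ((1 - κ) / 2) * bl1 (xhat - x) ≤ ∑ i ∈ bsupp x, bnorm (xhat - x) i := by
  set a := ∑ i ∈ bsupp x, bnorm (xhat - x) i
  set b := ∑ i ∈ (bsupp x)ᶜ, bnorm (xhat - x) i
  have hsplit : bl1 (xhat - x) = a + b := (Finset.sum_add_sum_compl _ _).symm
  have hdecomp := sum_compl_sub_sum_le_bl1_add_sub_bl1 x (xhat - x)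
  rw [add_sub_cancel] at hdecomp
  have hcone : μ * (b - a) ≤ μ * (κ * (a + b)) :=
    calc μ * (b - a) ≤ μ * (bl1 xhat - bl1 x) := by gcongr
      _ ≤ (Aᵀ *ᵥ w) ⬝ᵥ (xhat - x) := penalty_sub_le_dotProduct_of_le A bl1 hy (hmin x)
      _ ≤ blinf (Aᵀ *ᵥ w) * bl1 (xhat - x) := dotProduct_le_blinf_mul_bl1 _ _
      _ ≤ κ * μ * bl1 (xhat - x) := by
          gcongr
          exact Finset.sum_nonneg fun i _ => bnorm_nonneg _ i
      _ = μ * (κ * (a + b)) := by rw [hsplit]; ring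
  have hab : (1 - κ) * b ≤ (1 + κ) * a := by linarith [le_of_mul_le_mul_left hcone hμ]
  refine ⟨?_, ?_⟩
  · rw [div_mul_eq_mul_div, le_div_iff₀ (sub_pos.2 hκ1)]
    linarith
  · rw [hsplit]
    linarith

/-- Proposition 1, BS-LASSO case: for the Block-Sparse LASSO, the error
`h = x̂ - x` satisfies `‖h_{Sᶜ}‖_{b1} ≤ ((1+κ)/(1-κ))‖h_S‖_{b1}` and hence
`‖h_S‖_{b1} ≥ ((1-κ)/2)‖h‖_{b1}`. -/
theorem stmt2 {m n p k : ℕ} (A : Matrix (Fin m) (Fin p × Fin n) ℝ)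
    (x : Fin p × Fin n → ℝ) (w y : Fin m → ℝ) (xhat : Fin p × Fin n → ℝ) (κ μ : ℝ)
    (hsparse : (bsupp x).card ≤ k)
    (hκ0 : 0 < κ) (hκ1 : κ < 1) (hμ : 0 < μ)
    (hy : y = A.mulVec x + w)
    (hw : blinf (Aᵀ.mulVec w) ≤ κ * μ)
    (hmin : ∀ z : Fin p × Fin n → ℝ,
      (1 / 2) * (vnorm (y - A.mulVec xhat)) ^ 2 + μ * bl1 xhat ≤
        (1 / 2) * (vnorm (y - A.mulVec z)) ^ 2 + μ * bl1 z) :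
    (∑ i ∈ (bsupp x)ᶜ, bnorm (xhat - x) i ≤
      ((1 + κ) / (1 - κ)) * ∑ i ∈ bsupp x, bnorm (xhat - x) i) ∧
    ((1 - κ) / 2) * bl1 (xhat - x) ≤ ∑ i ∈ bsupp x, bnorm (xhat - x) i :=
  stmt2_general A x w y xhat κ μ hκ1 hμ hy hw hmin
end

section
/- Let x ∈ ℝ^{np} be k-block-sparse, let y = Ax + w with ‖w‖₂ ≤ ε, and let x̂ be a minimizer of ‖z‖_{b1} over all z with ‖y − Az‖₂ ≤ ε (the Block-Sparse Basis Pursuit). If ω₂(A,2k) > 0, then ‖x̂ − x‖_{b∞} ≤ 2ε/ω₂(A,2k). -/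
open MeasureTheory ProbabilityTheory Finset Matrix

/-! Let `h = x̂ - x`. Since `x` is feasible, minimality of `x̂` gives `‖x + h‖_{b1} ≤ ‖x‖_{b1}`, and the
triangle inequality on the blocks of the support `T` of `x` turns this into the cone condition
`∑_{i ∉ T} ‖h_i‖₂ ≤ ∑_{i ∈ T} ‖h_i‖₂`; hence `‖h‖_{b1} ≤ 2k ‖h‖_{b∞}`, so `h` is admissible in the
definition of `ω₂(A, 2k)`. Both `x` and `x̂` lie in the tube `‖y - Az‖₂ ≤ ε`, so `‖Ah‖₂ ≤ 2ε`,
and `ω₂(A, 2k) ‖h‖_{b∞} ≤ ‖Ah‖₂` gives the bound. -/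

section Norms

variable {ι : Type*} [Fintype ι]

lemma vnorm_sub_le (a b : ι → ℝ) : vnorm (a - b) ≤ vnorm a + vnorm b := by
  simpa only [vnorm_eq_norm, WithLp.toLp_sub] using norm_sub_le _ _

end Norms

section BlockNorms

variable {n p : ℕ}

lemma bnorm_sub_le (x y : Fin p × Fin n → ℝ) (i : Fin p) :
    bnorm (x - y) i ≤ bnorm x i + bnorm y i :=
  vnorm_sub_le (fun j => x (i, j)) (fun j => y (i, j))

lemma blinf_nonneg (x : Fin p × Fin n → ℝ) : 0 ≤ blinf x :=
  Real.iSup_nonneg (bnorm_nonneg x)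

@[simp]
lemma blinf_zero : blinf (0 : Fin p × Fin n → ℝ) = 0 := by
  simp [blinf, bnorm, vnorm]

lemma sum_bnorm_le_card_mul_blinf (S : Finset (Fin p)) (z : Fin p × Fin n → ℝ) :
    ∑ i ∈ S, bnorm z i ≤ #S * blinf z := by
  simpa using Finset.sum_le_sum fun i (_ : i ∈ S) => bnorm_le_blinf z i

lemma apply_eq_zero_of_notMem_bsupp {x : Fin p × Fin n → ℝ} {i : Fin p} (hi : i ∉ bsupp x)
    (j : Fin n) : x (i, j) = 0 := by
  by_contra hne
  exact hi (Finset.mem_filter.mpr ⟨Finset.mem_univ i, j, hne⟩)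

end BlockNorms

section Cone

variable {n p : ℕ} {S : Finset (Fin p)} {x h : Fin p × Fin n → ℝ}

lemma sum_compl_bnorm_le_of_bl1_add_le (hS : ∀ i ∉ S, ∀ j, x (i, j) = 0)
    (hle : bl1 (x + h) ≤ bl1 x) : ∑ i ∈ Sᶜ, bnorm h i ≤ ∑ i ∈ S, bnorm h i := by
  have off_S : ∀ i ∈ Sᶜ, bnorm x i = 0 ∧ bnorm (x + h) i = bnorm h i := fun i hi => by
    have hx : ∀ j, x (i, j) = 0 := hS i (Finset.mem_compl.mp hi)
    simp [bnorm, vnorm, hx]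
  have on_S : ∀ i ∈ S, bnorm x i ≤ bnorm (x + h) i + bnorm h i := fun i _ => by
    simpa using bnorm_sub_le (x + h) h i
  have hx : bl1 x ≤ ∑ i ∈ S, bnorm (x + h) i + ∑ i ∈ S, bnorm h i := by
    rw [bl1, ← Finset.sum_add_sum_compl S, Finset.sum_eq_zero fun i hi => (off_S i hi).1,
      add_zero, ← Finset.sum_add_distrib]
    exact Finset.sum_le_sum on_S
  have hxh : bl1 (x + h) = ∑ i ∈ S, bnorm (x + h) i + ∑ i ∈ Sᶜ, bnorm h i := by
    rw [bl1, ← Finset.sum_add_sum_compl S, Finset.sum_congr rfl fun i hi => (off_S i hi).2]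
  linarith

lemma bl1_le_two_card_mul_blinf (hS : ∀ i ∉ S, ∀ j, x (i, j) = 0)
    (hle : bl1 (x + h) ≤ bl1 x) : bl1 h ≤ 2 * #S * blinf h := by
  have hcone := sum_compl_bnorm_le_of_bl1_add_le hS hle
  have hS_card := sum_bnorm_le_card_mul_blinf S h
  rw [bl1, ← Finset.sum_add_sum_compl S]
  linarith

end Cone

lemma omega2_nonneg {m n p : ℕ} (A : Matrix (Fin m) (Fin p × Fin n) ℝ) (s : ℝ) :
    0 ≤ omega2 A s :=
  Real.sInf_nonneg <| by
    rintro r ⟨z, -, -, rfl⟩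
    exact div_nonneg (vnorm_nonneg _) (blinf_nonneg _)

lemma omega2_mul_blinf_le {m n p : ℕ} (A : Matrix (Fin m) (Fin p × Fin n) ℝ) {s : ℝ}
    {z : Fin p × Fin n → ℝ} (hz : bl1 z ≤ s * blinf z) :
    omega2 A s * blinf z ≤ vnorm (A *ᵥ z) := by
  rcases eq_or_ne z 0 with rfl | hz0
  · simpa using vnorm_nonneg _
  have hpos : 0 < blinf z := by
    obtain ⟨⟨i, j⟩, hij⟩ := Function.ne_iff.mp hz0
    refine lt_of_lt_of_le ?_ (bnorm_le_blinf z i)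
    exact Real.sqrt_pos.mpr <| Finset.sum_pos' (fun _ _ => sq_nonneg _)
      ⟨j, Finset.mem_univ j, sq_pos_of_ne_zero hij⟩
  rw [← le_div_iff₀ hpos]
  refine csInf_le ⟨0, ?_⟩ ⟨z, hz0, hz, rfl⟩
  rintro r ⟨z', -, -, rfl⟩
  exact div_nonneg (vnorm_nonneg _) (blinf_nonneg _)

/-- Theorem 1, BS-BP: `‖x̂ - x‖_{b∞} ≤ 2ε / ω₂(A, 2k)`. -/
theorem stmt5 {m n p k : ℕ} (A : Matrix (Fin m) (Fin p × Fin n) ℝ)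
    (x : Fin p × Fin n → ℝ) (w y : Fin m → ℝ) (xhat : Fin p × Fin n → ℝ) (ε : ℝ)
    (hsparse : (bsupp x).card ≤ k)
    (hy : y = A.mulVec x + w)
    (hw : vnorm w ≤ ε)
    (hfeas : vnorm (y - A.mulVec xhat) ≤ ε)
    (hmin : ∀ z : Fin p × Fin n → ℝ, vnorm (y - A.mulVec z) ≤ ε → bl1 xhat ≤ bl1 z)
    (hω : 0 < omega2 A (2 * k)) :
    blinf (xhat - x) ≤ 2 * ε / omega2 A (2 * k) := by
  have hx_feas : vnorm (y - A *ᵥ x) ≤ ε := by rwa [hy, add_sub_cancel_left]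
  have hcone : bl1 (xhat - x) ≤ 2 * k * blinf (xhat - x) := by
    have hle : bl1 (x + (xhat - x)) ≤ bl1 x := by simpa using hmin x hx_feas
    calc bl1 (xhat - x) ≤ 2 * #(bsupp x) * blinf (xhat - x) :=
          bl1_le_two_card_mul_blinf (fun _ hi => apply_eq_zero_of_notMem_bsupp hi) hle
      _ ≤ 2 * k * blinf (xhat - x) := by gcongr; exact blinf_nonneg _
  have htube : vnorm (A *ᵥ (xhat - x)) ≤ 2 * ε := by
    have hsplit : A *ᵥ (xhat - x) = (y - A *ᵥ x) - (y - A *ᵥ xhat) := by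
      rw [Matrix.mulVec_sub]; abel
    rw [hsplit, two_mul]
    exact (vnorm_sub_le _ _).trans (add_le_add hx_feas hfeas)
  rw [le_div_iff₀ hω, mul_comm]
  exact (omega2_mul_blinf_le A hcone).trans htube
end
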